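/- For any real I₁ × I₂ matrix B of rank at most r, one has ‖B‖_* = min { (1/2)(‖A₁‖_F² + ‖A₂‖_F²) : A₁ ∈ ℝ^{I₁×r}, A₂ ∈ ℝ^{I₂×r}, B = A₁A₂ᵀ }, where ‖B‖_* is the nuclear norm of B. -/

import Mathlib

open Matrix

/-- The nuclear norm of a real matrix: sum of its singular values,
i.e. the square roots of the eigenvalues of `Xᴴ * X`. -/
noncomputable def nuclearNorm {m n : ℕ} (X : Matrix (Fin m) (Fin n) ℝ) : ℝ :=
  ∑ i, Real.sqrt ((Matrix.isHermitian_conjTranspose_mul_self X).eigenvalues i)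

/-- Squared Frobenius norm. -/
def frobSq {m n : ℕ} (X : Matrix (Fin m) (Fin n) ℝ) : ℝ :=
  ∑ i, ∑ j, (X i j) ^ 2

/-!
Diagonalize `Bᵀ B = V diag(σ²) Vᵀ` with `V` orthogonal, so that the columns of `C = B V` are
orthogonal of lengths `σᵢ`, and put `W = C diag(σ⁻¹)` (with `0⁻¹ = 0`, so `W` kills the zero
columns): then `W` is a partial isometry and `C = W diag(σ)`.

If `B = A₁ A₂ᵀ`, then `∑ σᵢ = tr (Wᵀ B V) = ⟪A₁ᵀ W, A₂ᵀ V⟫_F`, which by AM-GM is at most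
`½ (‖A₁ᵀ W‖² + ‖A₂ᵀ V‖²) ≤ ½ (‖A₁‖² + ‖A₂‖²)`. Conversely `A₁ = W diag(√σ) Pᵀ`,
`A₂ = V diag(√σ) Pᵀ` attain the bound, where `P` sends the at most `r` indices with `σᵢ ≠ 0`
injectively to the `r` columns.
-/

section Frobenius

variable {m n k : ℕ}

lemma frobSq_eq_trace_transpose_mul (X : Matrix (Fin m) (Fin n) ℝ) :
    frobSq X = trace (Xᵀ * X) := by
  simp only [frobSq, trace, diag, mul_apply, transpose_apply, sq]
  exact Finset.sum_comm

lemma frobSq_transpose (X : Matrix (Fin m) (Fin n) ℝ) : frobSq Xᵀ = frobSq X :=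
  Finset.sum_comm

lemma frobSq_eq_trace_mul_transpose (X : Matrix (Fin m) (Fin n) ℝ) :
    frobSq X = trace (X * Xᵀ) := by
  rw [← frobSq_transpose, frobSq_eq_trace_transpose_mul, transpose_transpose]

lemma frobSq_nonneg (X : Matrix (Fin m) (Fin n) ℝ) : 0 ≤ frobSq X := by
  unfold frobSq
  positivity

lemma trace_transpose_mul_le_half_frobSq_add (X Y : Matrix (Fin m) (Fin n) ℝ) :
    trace (Xᵀ * Y) ≤ 1 / 2 * (frobSq X + frobSq Y) := by
  have h : trace (Xᵀ * Y) = ∑ i, ∑ j, X i j * Y i j := by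
    simp only [trace, diag, mul_apply, transpose_apply]
    exact Finset.sum_comm
  rw [h, frobSq, frobSq, ← Finset.sum_add_distrib, Finset.mul_sum]
  refine Finset.sum_le_sum fun i _ => ?_
  rw [← Finset.sum_add_distrib, Finset.mul_sum]
  exact Finset.sum_le_sum fun j _ => by nlinarith [sq_nonneg (X i j - Y i j)]

lemma frobSq_mul_le_of_mul_transpose_mul_self {W : Matrix (Fin n) (Fin k) ℝ}
    (hW : W * Wᵀ * W = W) (X : Matrix (Fin m) (Fin n) ℝ) : frobSq (X * W) ≤ frobSq X := by
  set Q := W * Wᵀ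
  have hQQ : Q * Q = Q := by simp only [Q, ← Matrix.mul_assoc, hW]
  have hQc : (1 - Q) * (1 - Q)ᵀ = 1 - Q := by
    rw [transpose_sub, transpose_one, show Qᵀ = Q by simp [Q], sub_mul, mul_sub, mul_sub, hQQ]
    simp
  have hXW : frobSq (X * W) = trace (X * Q * Xᵀ) := by
    rw [frobSq_eq_trace_mul_transpose, transpose_mul]
    simp only [Q, Matrix.mul_assoc]
  have hXP : frobSq (X * (1 - Q)) = trace (X * (1 - Q) * Xᵀ) := by
    rw [frobSq_eq_trace_mul_transpose, transpose_mul, ← Matrix.mul_assoc, Matrix.mul_assoc X, hQc]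
  have hX : frobSq X = trace (X * Q * Xᵀ) + trace (X * (1 - Q) * Xᵀ) := by
    rw [frobSq_eq_trace_mul_transpose, ← trace_add, ← Matrix.add_mul, ← Matrix.mul_add,
      add_sub_cancel, Matrix.mul_one]
  linarith [frobSq_nonneg (X * (1 - Q))]

lemma trace_transpose_mul_mul_le_half_frobSq_add {p : ℕ} {W : Matrix (Fin m) (Fin k) ℝ}
    {V : Matrix (Fin n) (Fin k) ℝ} (hW : W * Wᵀ * W = W) (hV : V * Vᵀ * V = V)
    (A₁ : Matrix (Fin m) (Fin p) ℝ) (A₂ : Matrix (Fin n) (Fin p) ℝ) :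
    trace (Wᵀ * (A₁ * A₂ᵀ) * V) ≤ 1 / 2 * (frobSq A₁ + frobSq A₂) := by
  have hreassoc : Wᵀ * (A₁ * A₂ᵀ) * V = (A₁ᵀ * W)ᵀ * (A₂ᵀ * V) := by
    simp only [transpose_mul, transpose_transpose, Matrix.mul_assoc]
  rw [hreassoc, ← frobSq_transpose A₁, ← frobSq_transpose A₂]
  linarith [trace_transpose_mul_le_half_frobSq_add (A₁ᵀ * W) (A₂ᵀ * V),
    frobSq_mul_le_of_mul_transpose_mul_self hW A₁ᵀ, frobSq_mul_le_of_mul_transpose_mul_self hV A₂ᵀ]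

lemma frobSq_mul_diagonal_mul_transpose {X : Matrix (Fin m) (Fin n) ℝ}
    {P : Matrix (Fin k) (Fin n) ℝ} {a b : Fin n → ℝ} (hX : Xᵀ * X = diagonal a)
    (hP : Pᵀ * P = diagonal b) (d : Fin n → ℝ) :
    frobSq (X * diagonal d * Pᵀ) = ∑ i, d i ^ 2 * a i * b i := by
  have hgram : (X * diagonal d * Pᵀ)ᵀ * (X * diagonal d * Pᵀ)
      = P * (diagonal d * (Xᵀ * X) * diagonal d) * Pᵀ := by
    simp only [transpose_mul, transpose_transpose, diagonal_transpose, Matrix.mul_assoc]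
  rw [frobSq_eq_trace_transpose_mul, hgram, trace_mul_cycle, hP, hX]
  simp only [diagonal_mul_diagonal, trace_diagonal]
  exact Finset.sum_congr rfl fun i _ => by ring

end Frobenius

section DiagonalGram

variable {m n : Type*} [Fintype m] [Fintype n] [DecidableEq n]

/-- A column of `C` whose Gram entry vanishes is itself zero. -/
lemma mul_diagonal_eq_self_of_transpose_mul_self_eq_diagonal {C : Matrix m n ℝ} {a : n → ℝ}
    (hC : Cᵀ * C = diagonal a) {f : n → ℝ} (hf : ∀ i, a i ≠ 0 → f i = 1) :
    C * diagonal f = C := by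
  ext j i
  rw [mul_diagonal]
  by_cases hai : a i = 0
  · have hcol : ∑ j, C j i ^ 2 = 0 := by
      simpa [mul_apply, sq, hai] using congrFun (congrFun hC i) i
    have hji : C j i ^ 2 = 0 :=
      (Finset.sum_eq_zero_iff_of_nonneg fun _ _ => sq_nonneg _).mp hcol j (Finset.mem_univ _)
    rw [pow_eq_zero_iff two_ne_zero |>.mp hji, zero_mul]
  · rw [hf i hai, mul_one]

lemma mul_diagonal_inv_mul_diagonal {C : Matrix m n ℝ} {σ : n → ℝ}
    (hC : Cᵀ * C = diagonal fun i => σ i ^ 2) : C * diagonal σ⁻¹ * diagonal σ = C := by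
  rw [Matrix.mul_assoc, diagonal_mul_diagonal]
  refine mul_diagonal_eq_self_of_transpose_mul_self_eq_diagonal hC fun i hi => ?_
  simp only [Pi.inv_apply]
  exact inv_mul_cancel₀ fun h => hi (by simp [h])

variable {K : Type*} [Field K] {C : Matrix m n K} {σ : n → K}

lemma transpose_mul_self_mul_diagonal_inv (hC : Cᵀ * C = diagonal fun i => σ i ^ 2) :
    (C * diagonal σ⁻¹)ᵀ * (C * diagonal σ⁻¹) = diagonal fun i => σ i * (σ i)⁻¹ := by
  rw [transpose_mul, diagonal_transpose, Matrix.mul_assoc, ← Matrix.mul_assoc Cᵀ, hC,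
    diagonal_mul_diagonal, diagonal_mul_diagonal]
  congr 1
  ext i
  simp only [Pi.inv_apply]
  rcases eq_or_ne (σ i) 0 with h | h
  · simp [h]
  · field_simp

lemma mul_diagonal_inv_mul_transpose_mul_self (hC : Cᵀ * C = diagonal fun i => σ i ^ 2) :
    C * diagonal σ⁻¹ * (C * diagonal σ⁻¹)ᵀ * (C * diagonal σ⁻¹) = C * diagonal σ⁻¹ := by
  rw [Matrix.mul_assoc, transpose_mul_self_mul_diagonal_inv hC, Matrix.mul_assoc,
    diagonal_mul_diagonal]
  congr 2
  ext i
  rw [← mul_assoc]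
  simpa using mul_inv_mul_cancel (σ i)⁻¹

lemma trace_transpose_mul_diagonal_inv_mul (hC : Cᵀ * C = diagonal fun i => σ i ^ 2) :
    trace ((C * diagonal σ⁻¹)ᵀ * C) = ∑ i, σ i := by
  rw [transpose_mul, diagonal_transpose, Matrix.mul_assoc, hC, diagonal_mul_diagonal,
    trace_diagonal]
  refine Finset.sum_congr rfl fun i _ => ?_
  simp only [Pi.inv_apply, sq]
  rw [← mul_assoc, inv_mul_mul_self]

end DiagonalGram

lemma exists_transpose_mul_self_eq_diagonal_indicator {R ι κ : Type*} [NonAssocSemiring R]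
    [Fintype ι] [DecidableEq ι] [Fintype κ] [DecidableEq κ] (p : κ → Prop) [DecidablePred p]
    (h : Fintype.card {i // p i} ≤ Fintype.card ι) :
    ∃ P : Matrix ι κ R, Pᵀ * P = diagonal fun i => if p i then 1 else 0 := by
  obtain ⟨e⟩ := Function.Embedding.nonempty_of_card_le h
  refine ⟨of fun k i => if hi : p i then if e ⟨i, hi⟩ = k then 1 else 0 else 0, ?_⟩
  ext i i'
  simp only [mul_apply, transpose_apply, of_apply, diagonal_apply]
  by_cases hi : p i <;> by_cases hi' : p i' <;> simp [hi, hi']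
  rintro rfl
  exact absurd hi hi'

section SingularValues

variable {m n r : ℕ} {B : Matrix (Fin m) (Fin n) ℝ} {V : Matrix (Fin n) (Fin n) ℝ}
  {σ : Fin n → ℝ}

lemma sum_le_half_frobSq_add_of_eq_mul_transpose
    (hC : (B * V)ᵀ * (B * V) = diagonal fun i => σ i ^ 2) (hV : V * Vᵀ = 1)
    {A₁ : Matrix (Fin m) (Fin r) ℝ} {A₂ : Matrix (Fin n) (Fin r) ℝ} (hB : B = A₁ * A₂ᵀ) :
    ∑ i, σ i ≤ 1 / 2 * (frobSq A₁ + frobSq A₂) := by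
  have h := trace_transpose_mul_mul_le_half_frobSq_add
    (mul_diagonal_inv_mul_transpose_mul_self hC) (by rw [hV, Matrix.one_mul]) A₁ A₂
  rwa [← hB, Matrix.mul_assoc, trace_transpose_mul_diagonal_inv_mul hC] at h

lemma exists_eq_mul_transpose_half_frobSq_add_eq (hσ : ∀ i, 0 ≤ σ i)
    (hC : (B * V)ᵀ * (B * V) = diagonal fun i => σ i ^ 2) (hV : V * Vᵀ = 1)
    (hcard : Fintype.card {i // σ i ≠ 0} ≤ r) :
    ∃ (A₁ : Matrix (Fin m) (Fin r) ℝ) (A₂ : Matrix (Fin n) (Fin r) ℝ),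
      B = A₁ * A₂ᵀ ∧ ∑ i, σ i = 1 / 2 * (frobSq A₁ + frobSq A₂) := by
  obtain ⟨P, hP⟩ := exists_transpose_mul_self_eq_diagonal_indicator (R := ℝ) (ι := Fin r)
    (fun i => σ i ≠ 0) (by simpa using hcard)
  set W := B * V * diagonal σ⁻¹
  set d := fun i => √(σ i)
  have hd : ∀ i, d i ^ 2 = σ i := fun i => Real.sq_sqrt (hσ i)
  have hσP : ∀ i, σ i * (if σ i ≠ 0 then 1 else 0) = σ i := fun i => by
    split_ifs with h <;> simp_all
  refine ⟨W * diagonal d * Pᵀ, V * diagonal d * Pᵀ, ?_, ?_⟩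
  · calc B = B * V * Vᵀ := by rw [Matrix.mul_assoc, hV, Matrix.mul_one]
      _ = W * diagonal σ * Vᵀ := by rw [mul_diagonal_inv_mul_diagonal hC]
      _ = W * (diagonal d * (Pᵀ * P) * diagonal d) * Vᵀ := by
        rw [hP, diagonal_mul_diagonal, diagonal_mul_diagonal]
        congr 3
        ext i
        rw [mul_right_comm, ← sq, hd, hσP]
      _ = W * diagonal d * Pᵀ * (V * diagonal d * Pᵀ)ᵀ := by
        simp only [transpose_mul, transpose_transpose, diagonal_transpose, Matrix.mul_assoc]
  · rw [frobSq_mul_diagonal_mul_transpose (transpose_mul_self_mul_diagonal_inv hC) hP,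
      frobSq_mul_diagonal_mul_transpose (by rw [mul_eq_one_comm.mp hV, diagonal_one]) hP]
    simp only [hd, ← mul_assoc, mul_self_mul_inv, mul_one, hσP]
    ring

theorem isLeast_half_frobSq_add (hσ : ∀ i, 0 ≤ σ i)
    (hC : (B * V)ᵀ * (B * V) = diagonal fun i => σ i ^ 2) (hV : V * Vᵀ = 1)
    (hcard : Fintype.card {i // σ i ≠ 0} ≤ r) :
    IsLeast {v : ℝ | ∃ (A₁ : Matrix (Fin m) (Fin r) ℝ) (A₂ : Matrix (Fin n) (Fin r) ℝ),
        B = A₁ * A₂ᵀ ∧ v = (1 / 2) * (frobSq A₁ + frobSq A₂)} (∑ i, σ i) := by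
  refine ⟨exists_eq_mul_transpose_half_frobSq_add_eq hσ hC hV hcard, ?_⟩
  rintro v ⟨A₁, A₂, hB, rfl⟩
  exact sum_le_half_frobSq_add_of_eq_mul_transpose hC hV hB

end SingularValues

lemma Matrix.IsHermitian.transpose_eigenvectorUnitary_mul_mul_eigenvectorUnitary {n : Type*}
    [Fintype n] [DecidableEq n] {A : Matrix n n ℝ} (hA : A.IsHermitian) :
    (hA.eigenvectorUnitary : Matrix n n ℝ)ᵀ * A * hA.eigenvectorUnitary
      = diagonal hA.eigenvalues := by
  have h := hA.conjStarAlgAut_star_eigenvectorUnitary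
  rw [Unitary.conjStarAlgAut_star_apply] at h
  simpa [star_eq_conjTranspose] using h

theorem stmt4 {I₁ I₂ r : ℕ} (B : Matrix (Fin I₁) (Fin I₂) ℝ) (hrank : B.rank ≤ r) :
    IsLeast {v : ℝ | ∃ (A₁ : Matrix (Fin I₁) (Fin r) ℝ) (A₂ : Matrix (Fin I₂) (Fin r) ℝ),
        B = A₁ * A₂ᵀ ∧ v = (1 / 2) * (frobSq A₁ + frobSq A₂)}
      (nuclearNorm B) := by
  have hM := isHermitian_conjTranspose_mul_self B
  have hμ : ∀ i, 0 ≤ hM.eigenvalues i := (posSemidef_conjTranspose_mul_self B).eigenvalues_nonneg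
  refine isLeast_half_frobSq_add (V := hM.eigenvectorUnitary) (fun i => Real.sqrt_nonneg _)
    ?_ ?_ ?_
  · calc _ = (hM.eigenvectorUnitary : Matrix (Fin I₂) (Fin I₂) ℝ)ᵀ * (Bᴴ * B)
          * (hM.eigenvectorUnitary : Matrix (Fin I₂) (Fin I₂) ℝ) := by
          simp only [transpose_mul, Matrix.mul_assoc, conjTranspose_eq_transpose_of_trivial]
      _ = diagonal hM.eigenvalues := hM.transpose_eigenvectorUnitary_mul_mul_eigenvectorUnitary
      _ = _ := by simp only [Real.sq_sqrt (hμ _)]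
  · simpa [star_eq_conjTranspose] using mem_unitaryGroup_iff.mp hM.eigenvectorUnitary.2
  · calc Fintype.card {i // √(hM.eigenvalues i) ≠ 0}
        = Fintype.card {i // hM.eigenvalues i ≠ 0} :=
          Fintype.card_congr (Equiv.subtypeEquivRight fun i => Real.sqrt_ne_zero (hμ i))
      _ = B.rank := by rw [← hM.rank_eq_card_non_zero_eigs, rank_conjTranspose_mul_self]
      _ ≤ r := hrank
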